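/- Let K = conv{(−1,−2),(−1,−1),(1,1),(1,2)} ⊂ ℝ² and K_t = diag(1,e^t)K. As t → −∞, K_t ∩ K converges (in Hausdorff distance) to the segment [−1/3, 1/3] × {0}; in particular |K_t ∩ K| → 0. -/

import Mathlib

open MeasureTheory Filter

noncomputable def e2 : (Fin 2 → ℝ) → EuclideanSpace ℝ (Fin 2) :=
  (EuclideanSpace.equiv (Fin 2) ℝ).symm

/-! `K` is the parallelogram `|x₀| ≤ 1, |x₁ - 3x₀/2| ≤ 1/2`, so its points have `|x₁| ≤ 2` and those
of `K_t` have `|x₁| ≤ 2eᵗ`; inside `K` the slab condition then forces `|x₀| ≤ 1/3 + 4eᵗ/3`. Thus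
`K_t ∩ K` lies in the rectangle `[-(1/3 + 2eᵗ), 1/3 + 2eᵗ] × [-2eᵗ, 2eᵗ]`, of area `O(eᵗ)` and within
Hausdorff distance `O(eᵗ)` of the segment; conversely the segment lies in `K` on the fixed axis of
`diag(1, eᵗ)`, hence in every `K_t ∩ K`. -/
open Real Set Topology

local notation "E²" => EuclideanSpace ℝ (Fin 2)

@[simp]
lemma e2_apply (v : Fin 2 → ℝ) (i : Fin 2) : e2 v i = v i := rfl

lemma exists_abs_le_abs_sub_le {x a r : ℝ} (ha : 0 ≤ a) (hr : 0 ≤ r) (hx : |x| ≤ a + r) :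
    ∃ c, |c| ≤ a ∧ |x - c| ≤ r := by
  refine ⟨max (-a) (min a x), ?_, ?_⟩ <;> rw [abs_le] at * <;> grind

lemma dist_le_abs_add_abs (x y : E²) : dist x y ≤ |x 0 - y 0| + |x 1 - y 1| := by
  rw [EuclideanSpace.dist_eq, Fin.sum_univ_two, Real.sqrt_le_left (by positivity), Real.dist_eq,
    Real.dist_eq]
  nlinarith [abs_nonneg (x 0 - y 0), abs_nonneg (x 1 - y 1), sq_abs (x 0 - y 0), sq_abs (x 1 - y 1)]

lemma segment_e2_eq_setOf {a : ℝ} (ha : 0 ≤ a) :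
    segment ℝ (e2 ![-a, 0]) (e2 ![a, 0]) = {x | |x 0| ≤ a ∧ x 1 = 0} := by
  let L := (LinearMap.toSpanSingleton ℝ E² (e2 ![1, 0])).toAffineMap
  have hL : ∀ c : ℝ, e2 ![c, 0] = L c := by
    intro c; ext i; fin_cases i <;> simp [L]
  rw [hL (-a), hL a, ← image_segment, segment_eq_Icc (by linarith)]
  ext x
  simp only [mem_image, mem_Icc, mem_ofPred_eq, abs_le]
  constructor
  · rintro ⟨c, hc, rfl⟩
    simpa [← hL] using hc
  · rintro ⟨hx0, hx1⟩
    refine ⟨x 0, hx0, ?_⟩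
    rw [← hL]
    ext i; fin_cases i <;> simp [hx1]

def centeredRect (a b : ℝ) : Set E² := {x | |x 0| ≤ a ∧ |x 1| ≤ b}

lemma volume_centeredRect (a b : ℝ) :
    volume (centeredRect a b) = ENNReal.ofReal (2 * a) * ENNReal.ofReal (2 * b) := by
  have hpre : centeredRect a b = (MeasurableEquiv.toLp 2 (Fin 2 → ℝ)).symm ⁻¹'
        (univ.pi fun i => Icc (![-a, -b] i) (![a, b] i)) := by
    ext x
    simp only [centeredRect, mem_ofPred_eq, mem_preimage, Set.mem_pi, mem_univ, true_implies,
      Fin.forall_fin_two, mem_Icc, abs_le]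
    rfl
  rw [hpre, (EuclideanSpace.volume_preserving_symm_measurableEquiv_toLp (Fin 2)).measure_preimage
    (MeasurableSet.univ_pi fun i => measurableSet_Icc).nullMeasurableSet, volume_pi_pi]
  simp only [Fin.prod_univ_two, Real.volume_Icc]
  norm_num [two_mul]

lemma hausdorffDist_segment_le {A : Set E²} {a r : ℝ} (ha : 0 ≤ a)
    (hSA : segment ℝ (e2 ![-a, 0]) (e2 ![a, 0]) ⊆ A) (hA : A ⊆ centeredRect (a + r) r) :
    Metric.hausdorffDist A (segment ℝ (e2 ![-a, 0]) (e2 ![a, 0])) ≤ 2 * r := by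
  have hr : 0 ≤ r := (abs_nonneg _).trans (hA (hSA (left_mem_segment ℝ _ _))).2
  refine Metric.hausdorffDist_le_of_mem_dist (by positivity) (fun p hp => ?_)
    fun q hq => ⟨q, hSA hq, by simpa using by positivity⟩
  obtain ⟨hp0, hp1⟩ := hA hp
  obtain ⟨c, hca, hpc⟩ := exists_abs_le_abs_sub_le ha hr hp0
  refine ⟨e2 ![c, 0], by simpa [segment_e2_eq_setOf ha] using hca, ?_⟩
  calc dist p (e2 ![c, 0]) ≤ |p 0 - c| + |p 1| := by
        simpa using dist_le_abs_add_abs p (e2 ![c, 0])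
    _ ≤ 2 * r := by linarith

def parallelogramVertices : Set E² := {e2 ![-1, -2], e2 ![-1, -1], e2 ![1, 1], e2 ![1, 2]}

def parallelogram : Set E² := {x | |x 0| ≤ 1 ∧ |x 1 - 3 / 2 * x 0| ≤ 1 / 2}

noncomputable def scaleSnd (s : ℝ) (x : E²) : E² := e2 ![x 0, s * x 1]

lemma convex_parallelogram : Convex ℝ parallelogram := by
  intro x hx y hy a b ha hb hab
  simp only [parallelogram, mem_ofPred_eq, abs_le, PiLp.add_apply, PiLp.smul_apply,
    smul_eq_mul] at *
  refine ⟨⟨?_, ?_⟩, ?_, ?_⟩ <;> nlinarith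

lemma convexHull_parallelogramVertices_subset :
    convexHull ℝ parallelogramVertices ⊆ parallelogram :=
  convexHull_min
    (by simp [parallelogramVertices, insert_subset_iff, parallelogram, abs_le]; norm_num)
    convex_parallelogram

lemma segment_subset_convexHull_parallelogramVertices :
    segment ℝ (e2 ![-(1 / 3), 0]) (e2 ![1 / 3, 0]) ⊆ convexHull ℝ parallelogramVertices := by
  have hcomb : ∀ {u v : E²} {w : ℝ}, u ∈ parallelogramVertices → v ∈ parallelogramVertices →
      0 ≤ w → w ≤ 1 → w • u + (1 - w) • v ∈ convexHull ℝ parallelogramVertices :=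
    fun hu hv hw0 hw1 => convex_convexHull ℝ _ (subset_convexHull ℝ _ hu)
      (subset_convexHull ℝ _ hv) hw0 (by linarith) (by ring)
  apply (convex_convexHull ℝ _).segment_subset
  · convert hcomb (u := e2 ![-1, -1]) (v := e2 ![1, 2]) (w := 2 / 3)
      (by simp [parallelogramVertices]) (by simp [parallelogramVertices]) (by norm_num)
      (by norm_num) using 1
    ext i; fin_cases i <;> norm_num
  · convert hcomb (u := e2 ![-1, -2]) (v := e2 ![1, 1]) (w := 1 / 3)
      (by simp [parallelogramVertices]) (by simp [parallelogramVertices]) (by norm_num)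
      (by norm_num) using 1
    ext i; fin_cases i <;> norm_num

lemma scaleSnd_eq_self {x : E²} (hx : x 1 = 0) (s : ℝ) : scaleSnd s x = x := by
  ext i; fin_cases i <;> simp [scaleSnd, hx]

lemma scaleSnd_image_inter_parallelogram_subset {s : ℝ} (hs : 0 ≤ s) :
    scaleSnd s '' parallelogram ∩ parallelogram ⊆ centeredRect (1 / 3 + 2 * s) (2 * s) := by
  rintro _ ⟨⟨q, ⟨hq0, hq1⟩, rfl⟩, -, hp1⟩
  simp only [centeredRect, scaleSnd, e2_apply, Matrix.cons_val_zero,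
    Matrix.cons_val_one, mem_ofPred_eq, abs_le] at *
  have hsnd : -(2 * s) ≤ s * q 1 ∧ s * q 1 ≤ 2 * s := by
    constructor <;> nlinarith
  refine ⟨⟨?_, ?_⟩, hsnd⟩ <;> linarith

theorem stmt16 (K : Set (EuclideanSpace ℝ (Fin 2)))
    (hK : K = convexHull ℝ
      {e2 ![-1, -2], e2 ![-1, -1], e2 ![1, 1], e2 ![1, 2]})
    (Kt : ℝ → Set (EuclideanSpace ℝ (Fin 2)))
    (hKt : ∀ t, Kt t = (fun x : EuclideanSpace ℝ (Fin 2) =>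
      e2 ![x 0, Real.exp t * x 1]) '' K)
    (S : Set (EuclideanSpace ℝ (Fin 2)))
    (hS : S = segment ℝ (e2 ![-1/3, 0]) (e2 ![1/3, 0])) :
    Tendsto (fun t => Metric.hausdorffDist (Kt t ∩ K) S) atBot (nhds 0) ∧
      Tendsto (fun t => volume (Kt t ∩ K)) atBot (nhds 0) := by
  change K = convexHull ℝ parallelogramVertices at hK
  change ∀ t, Kt t = scaleSnd (exp t) '' K at hKt
  rw [show (-1 / 3 : ℝ) = -(1 / 3) by norm_num] at hS
  have hSK : S ⊆ K := hS ▸ hK ▸ segment_subset_convexHull_parallelogramVertices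
  have hSKt : ∀ t, S ⊆ Kt t ∩ K := fun t p hp => by
    have hp1 : p 1 = 0 := by rw [hS, segment_e2_eq_setOf (by norm_num)] at hp; exact hp.2
    exact ⟨hKt t ▸ ⟨p, hSK hp, scaleSnd_eq_self hp1 _⟩, hSK hp⟩
  have hrect : ∀ t, Kt t ∩ K ⊆ centeredRect (1 / 3 + 2 * exp t) (2 * exp t) := fun t =>
    have hKP : K ⊆ parallelogram := hK ▸ convexHull_parallelogramVertices_subset
    hKt t ▸ (inter_subset_inter (image_mono hKP) hKP).trans
      (scaleSnd_image_inter_parallelogram_subset (exp_pos t).le)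
  constructor
  · refine squeeze_zero (fun _ => Metric.hausdorffDist_nonneg)
      (fun t => hS ▸ hausdorffDist_segment_le (by norm_num) (hS ▸ hSKt t) (hrect t)) ?_
    simpa using (tendsto_exp_atBot.const_mul 2).const_mul 2
  · have hbound : Tendsto (fun t => ENNReal.ofReal (2 * (1 / 3 + 2 * exp t)) *
        ENNReal.ofReal (2 * (2 * exp t))) atBot (𝓝 0) := by
      have hfst := ENNReal.tendsto_ofReal
        (((tendsto_exp_atBot.const_mul 2).const_add (1 / 3)).const_mul 2)
      have hsnd := ENNReal.tendsto_ofReal ((tendsto_exp_atBot.const_mul 2).const_mul 2)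
      simpa using
        ENNReal.Tendsto.mul hfst (.inr ENNReal.ofReal_ne_top) hsnd (.inr ENNReal.ofReal_ne_top)
    exact tendsto_of_tendsto_of_tendsto_of_le_of_le tendsto_const_nhds hbound (fun _ => zero_le)
      fun t => (measure_mono (hrect t)).trans_eq (volume_centeredRect _ _)
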